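/- Let C be a configuration whose smallest enclosing rectangle R = ABCD is non-square, with A = (0,0), B = (n−1,0), C = (n−1,m−1), D = (0,m−1) after translation and m ≠ n. Then the following are equivalent: (1) among the four associated strings λ_AB, λ_BA, λ_CD, λ_DC there is a unique lexicographically largest one (C is asymmetric); (2) none of the three nontrivial symmetries of R — the reflection σ_v(x,y) = (n−1−x, y), the reflection σ_h(x,y) = (x, m−1−y) and the rotation ρ(x,y) = (n−1−x, m−1−y) — maps C onto C. -/

import Mathlib

/-! Robots occupy distinct points of the integer grid `ℤ²`; a configuration is a
nonempty finite set `C : Finset (ℤ × ℤ)`.  Throughout, the smallest enclosing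
rectangle is translated so that its corners are `A = (0,0)`, `B = (n-1,0)`,
`C = (n-1,m-1)`, `D = (0,m-1)`, where `n` is the number of grid points on side
`AB` and `m` the number of grid points on side `AD`. -/

/-- Occupancy scan of a rectangle: `M` successive grid lines, each holding `N`
grid points; `f i j` is the grid point on the `i`-th line at position `j`;
record `true` at occupied and `false` at unoccupied grid points. -/
def scanStr (C : Finset (ℤ × ℤ)) (M N : ℕ) (f : ℕ → ℕ → ℤ × ℤ) : List Bool :=
  (List.range M).flatMap (fun i => (List.range N).map (fun j => decide (f i j ∈ C)))

/-- `λ_AB`: rows `y = 0, …, m-1`, each scanned with `x` ascending. -/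
def lamAB (C : Finset (ℤ × ℤ)) (n m : ℕ) : List Bool :=
  scanStr C m n (fun y x => ((x : ℤ), (y : ℤ)))

/-- `λ_BA`: rows `y = 0, …, m-1`, each scanned with `x` descending. -/
def lamBA (C : Finset (ℤ × ℤ)) (n m : ℕ) : List Bool :=
  scanStr C m n (fun y x => ((n : ℤ) - 1 - x, (y : ℤ)))

/-- `λ_CD`: rows `y = m-1, …, 0`, each scanned with `x` descending. -/
def lamCD (C : Finset (ℤ × ℤ)) (n m : ℕ) : List Bool :=
  scanStr C m n (fun y x => ((n : ℤ) - 1 - x, (m : ℤ) - 1 - y))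

/-- `λ_DC`: rows `y = m-1, …, 0`, each scanned with `x` ascending. -/
def lamDC (C : Finset (ℤ × ℤ)) (n m : ℕ) : List Bool :=
  scanStr C m n (fun y x => ((x : ℤ), (m : ℤ) - 1 - y))

/-- `λ_BC`: columns `x = n-1, …, 0`, each scanned with `y` ascending. -/
def lamBC (C : Finset (ℤ × ℤ)) (n m : ℕ) : List Bool :=
  scanStr C n m (fun x y => ((n : ℤ) - 1 - x, (y : ℤ)))

/-- `λ_CB`: columns `x = n-1, …, 0`, each scanned with `y` descending. -/
def lamCB (C : Finset (ℤ × ℤ)) (n m : ℕ) : List Bool :=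
  scanStr C n m (fun x y => ((n : ℤ) - 1 - x, (m : ℤ) - 1 - y))

/-- `λ_AD`: columns `x = 0, …, n-1`, each scanned with `y` ascending. -/
def lamAD (C : Finset (ℤ × ℤ)) (n m : ℕ) : List Bool :=
  scanStr C n m (fun x y => ((x : ℤ), (y : ℤ)))

/-- `λ_DA`: columns `x = 0, …, n-1`, each scanned with `y` descending. -/
def lamDA (C : Finset (ℤ × ℤ)) (n m : ℕ) : List Bool :=
  scanStr C n m (fun x y => ((x : ℤ), (m : ℤ) - 1 - y))

/-- Strict lexicographic comparison of binary strings. -/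
def lexLt (a b : List Bool) : Prop := List.Lex (· < ·) a b

/-- The smallest enclosing rectangle of `C` is `[0, n-1] × [0, m-1]`
(`n` grid points wide, `m` grid points high). -/
def isSER (C : Finset (ℤ × ℤ)) (n m : ℕ) : Prop :=
  (∀ p ∈ C, 0 ≤ p.1 ∧ p.1 ≤ (n : ℤ) - 1 ∧ 0 ≤ p.2 ∧ p.2 ≤ (m : ℤ) - 1) ∧
  (∃ p ∈ C, p.1 = 0) ∧ (∃ p ∈ C, p.1 = (n : ℤ) - 1) ∧
  (∃ p ∈ C, p.2 = 0) ∧ (∃ p ∈ C, p.2 = (m : ℤ) - 1)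

/-- The order in which grid points are visited by the scan `λ_AB`:
`p` comes strictly before `q`. -/
def scanLt (p q : ℤ × ℤ) : Prop := p.2 < q.2 ∨ (p.2 = q.2 ∧ p.1 < q.1)

/-- `h` is the head of `C`: the robot at the position of the first `1` of `λ_AB`. -/
def isHead (C : Finset (ℤ × ℤ)) (h : ℤ × ℤ) : Prop :=
  h ∈ C ∧ ∀ p ∈ C, p ≠ h → scanLt h p

/-- `t` is the tail of `C`: the robot at the position of the last `1` of `λ_AB`. -/
def isTail (C : Finset (ℤ × ℤ)) (t : ℤ × ℤ) : Prop :=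
  t ∈ C ∧ ∀ p ∈ C, p ≠ t → scanLt p t

/-- The four associated strings of a non-square configuration. -/
def strings4 (C : Finset (ℤ × ℤ)) (n m : ℕ) : List (List Bool) :=
  [lamAB C n m, lamBA C n m, lamCD C n m, lamDC C n m]

/-- The eight associated strings of a configuration whose rectangle is a square. -/
def strings8 (C : Finset (ℤ × ℤ)) (n m : ℕ) : List (List Bool) :=
  [lamAB C n m, lamBA C n m, lamCD C n m, lamDC C n m,
   lamBC C n m, lamCB C n m, lamAD C n m, lamDA C n m]

/-- The associated strings of `C`: eight of them if the rectangle is a square,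
four otherwise. -/
def assocStrings (C : Finset (ℤ × ℤ)) (n m : ℕ) : List (List Bool) :=
  if n = m then strings8 C n m else strings4 C n m

/-- The `i`-th member of the list `L` of associated strings is the unique
lexicographically largest one: every other member (by position) is strictly
smaller. -/
def uniqueMaxAt (L : List (List Bool)) (i : ℕ) : Prop :=
  i < L.length ∧ ∀ j < L.length, j ≠ i → lexLt (L.getD j []) (L.getD i [])

/-- `C` is asymmetric: among its associated strings there is a unique
lexicographically largest one. -/
def asymmetricCfg (C : Finset (ℤ × ℤ)) (n m : ℕ) : Prop :=
  ∃ i, uniqueMaxAt (assocStrings C n m) i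

/-- `λ_AB` is the unique lexicographically largest associated string of `C`
(so `C` is asymmetric with leading corner `A`). -/
def leadingABCfg (C : Finset (ℤ × ℤ)) (n m : ℕ) : Prop :=
  uniqueMaxAt (assocStrings C n m) 0

/-! The four strings are `λ_AB` of the images of `C` under the symmetries `id, σ_v, ρ, σ_h`
of the rectangle, and `λ_AB` is injective on configurations inside the rectangle. As these
symmetries form a Klein four-group, `λ_AB (g C) = λ_AB (h C)` iff `g ∘ h` fixes `C`. So if a
nontrivial symmetry fixes `C`, the strings fall into two pairs of equal strings and no maximum is
unique; otherwise they are pairwise distinct and the largest one is unique. -/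

open Function

theorem lexLt_iff_lt {a b : List Bool} : lexLt a b ↔ a < b := Iff.rfl

section UniqueMax

variable {L : List (List Bool)}

theorem uniqueMaxAt.getD_ne {i j : ℕ} (h : uniqueMaxAt L i) (hj : j < L.length)
    (hji : j ≠ i) : L.getD j [] ≠ L.getD i [] :=
  fun heq => lt_irrefl (L.getD i []) (by simpa only [heq] using lexLt_iff_lt.1 (h.2 j hj hji))

theorem exists_uniqueMaxAt_of_nodup (hL : L ≠ []) (hnd : L.Nodup) : ∃ i, uniqueMaxAt L i := by
  have hpos : 0 < L.length := List.length_pos_iff.2 hL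
  set x := L.maximum_of_length_pos hpos
  have hi : L.idxOf x < L.length :=
    List.idxOf_lt_length_iff.2 (List.maximum_of_length_pos_mem hpos)
  refine ⟨L.idxOf x, hi, fun j hj hji => ?_⟩
  rw [List.getD_eq_getElem _ _ hj, List.getD_eq_getElem _ _ hi, List.getElem_idxOf, lexLt_iff_lt]
  refine lt_of_le_of_ne (List.le_maximum_of_length_pos_of_mem (List.getElem_mem hj) hpos) ?_
  rw [← List.getElem_idxOf hi, Ne, hnd.getElem_inj_iff]
  exact hji

end UniqueMax

theorem not_exists_uniqueMaxAt_of_paired {a b c d : List Bool}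
    (h : (a = b ∧ c = d) ∨ (a = c ∧ b = d) ∨ (a = d ∧ b = c)) :
    ¬ ∃ i, uniqueMaxAt [a, b, c, d] i := by
  rintro ⟨i, hmax⟩
  have twin := fun j (hj : j < 4) (hji : j ≠ i) => hmax.getD_ne hj hji
  have hi : i < 4 := hmax.1
  interval_cases i <;> rcases h with ⟨rfl, rfl⟩ | ⟨rfl, rfl⟩ | ⟨rfl, rfl⟩ <;>
    first
    | (refine twin 0 ?_ ?_ rfl <;> decide)
    | (refine twin 1 ?_ ?_ rfl <;> decide)
    | (refine twin 2 ?_ ?_ rfl <;> decide)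
    | (refine twin 3 ?_ ?_ rfl <;> decide)

theorem scanStr_eq_scanStr_iff {C C' : Finset (ℤ × ℤ)} {M N : ℕ} {f g : ℕ → ℕ → ℤ × ℤ} :
    scanStr C M N f = scanStr C' M N g ↔ ∀ i < M, ∀ j < N, (f i j ∈ C ↔ g i j ∈ C') := by
  rw [scanStr, scanStr, List.flatMap_def, List.flatMap_def]
  constructor
  · intro h
    have rows := List.eq_iff_flatten_eq.2 ⟨h, by simp [comp_def]⟩
    simpa only [List.map_inj_left, List.mem_range, decide_eq_decide] using rows
  · intro h
    congr 1
    exact List.map_congr_left fun i hi => List.map_congr_left fun j hj =>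
      decide_eq_decide.2 (h i (List.mem_range.1 hi) j (List.mem_range.1 hj))

theorem Function.Involutive.mem_finsetImage_iff {α : Type*} [DecidableEq α] {f : α → α}
    (hf : Involutive f) {s : Finset α} {x : α} : x ∈ s.image f ↔ f x ∈ s := by
  rw [← Finset.mem_coe, Finset.coe_image, Set.mem_image_iff_of_inverse hf hf, Finset.mem_coe]

theorem Finset.image_eq_image_iff_of_involutive {α : Type*} [DecidableEq α] {s : Finset α}
    {g h : α → α} (hg : Involutive g) : s.image g = s.image h ↔ s.image (g ∘ h) = s := by
  constructor
  · intro e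
    rw [← image_image, ← e, image_image, hg.comp_self, image_id]
  · intro e
    conv_lhs => rw [← e]
    rw [image_image, ← comp_assoc, hg.comp_self, id_comp]

def gridRect (n m : ℕ) : Set (ℤ × ℤ) := Set.Icc 0 ((n : ℤ) - 1, (m : ℤ) - 1)

def reflX (n : ℕ) (p : ℤ × ℤ) : ℤ × ℤ := ((n : ℤ) - 1 - p.1, p.2)

def reflY (m : ℕ) (p : ℤ × ℤ) : ℤ × ℤ := (p.1, (m : ℤ) - 1 - p.2)

section Grid

variable {n m : ℕ}

theorem mem_gridRect {p : ℤ × ℤ} :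
    p ∈ gridRect n m ↔ 0 ≤ p.1 ∧ p.1 ≤ (n : ℤ) - 1 ∧ 0 ≤ p.2 ∧ p.2 ≤ (m : ℤ) - 1 := by
  simp only [gridRect, Set.mem_Icc, Prod.le_def, Prod.fst_zero, Prod.snd_zero]
  tauto

theorem reflX_involutive : Involutive (reflX n) := fun p => by simp [reflX]

theorem reflY_involutive : Involutive (reflY m) := fun p => by simp [reflY]

theorem reflX_comp_reflY_involutive : Involutive (reflX n ∘ reflY m) :=
  fun p => by simp [reflX, reflY]

theorem mapsTo_reflX : Set.MapsTo (reflX n) (gridRect n m) (gridRect n m) := by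
  intro p hp
  rw [mem_gridRect] at hp ⊢
  simp only [reflX]
  omega

theorem mapsTo_reflY : Set.MapsTo (reflY m) (gridRect n m) (gridRect n m) := by
  intro p hp
  rw [mem_gridRect] at hp ⊢
  simp only [reflY]
  omega

theorem isSER.coe_subset_gridRect {C : Finset (ℤ × ℤ)} (h : isSER C n m) :
    (C : Set (ℤ × ℤ)) ⊆ gridRect n m :=
  fun p hp => mem_gridRect.2 (h.1 p hp)

theorem lamAB_injOn :
    Set.InjOn (fun C => lamAB C n m) {C | (C : Set (ℤ × ℤ)) ⊆ gridRect n m} := by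
  intro C hC C' hC' h
  ext ⟨x, y⟩
  by_cases hp : (x, y) ∈ gridRect n m
  · obtain ⟨hx0, hxn, hy0, hym⟩ := mem_gridRect.1 hp
    lift x to ℕ using hx0
    lift y to ℕ using hy0
    exact scanStr_eq_scanStr_iff.1 h y (by omega) x (by omega)
  · exact iff_of_false (fun h => hp (hC h)) (fun h => hp (hC' h))

theorem lamBA_eq_lamAB_image (C : Finset (ℤ × ℤ)) :
    lamBA C n m = lamAB (C.image (reflX n)) n m :=
  scanStr_eq_scanStr_iff.2 fun i _ j _ =>
    (reflX_involutive (n := n)).mem_finsetImage_iff (x := ((j : ℤ), (i : ℤ))) |>.symm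

theorem lamDC_eq_lamAB_image (C : Finset (ℤ × ℤ)) :
    lamDC C n m = lamAB (C.image (reflY m)) n m :=
  scanStr_eq_scanStr_iff.2 fun i _ j _ =>
    (reflY_involutive (m := m)).mem_finsetImage_iff (x := ((j : ℤ), (i : ℤ))) |>.symm

theorem lamCD_eq_lamAB_image (C : Finset (ℤ × ℤ)) :
    lamCD C n m = lamAB (C.image (reflX n ∘ reflY m)) n m :=
  scanStr_eq_scanStr_iff.2 fun i _ j _ =>
    (reflX_comp_reflY_involutive (n := n) (m := m)).mem_finsetImage_iff
      (x := ((j : ℤ), (i : ℤ))) |>.symm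

theorem strings4_eq_map_lamAB_image (C : Finset (ℤ × ℤ)) :
    strings4 C n m =
      [id, reflX n, reflX n ∘ reflY m, reflY m].map fun g => lamAB (C.image g) n m := by
  simp [strings4, lamBA_eq_lamAB_image, lamCD_eq_lamAB_image, lamDC_eq_lamAB_image]

theorem lamAB_image_eq_lamAB_image_iff {C : Finset (ℤ × ℤ)}
    (hC : (C : Set (ℤ × ℤ)) ⊆ gridRect n m)
    {g h : ℤ × ℤ → ℤ × ℤ} (hg : Set.MapsTo g (gridRect n m) (gridRect n m))
    (hh : Set.MapsTo h (gridRect n m) (gridRect n m)) (hgi : Involutive g) :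
    lamAB (C.image g) n m = lamAB (C.image h) n m ↔ C.image (g ∘ h) = C := by
  rw [lamAB_injOn.eq_iff, Finset.image_eq_image_iff_of_involutive hgi]
  · simpa using (hg.mono_left hC).image_subset
  · simpa using (hh.mono_left hC).image_subset

end Grid

theorem asymmetric_iff_no_nontrivial_rectangle_symmetry_general
    (C : Finset (ℤ × ℤ)) (n m : ℕ)
    (hser : isSER C n m) :
    (∃ i, uniqueMaxAt (strings4 C n m) i) ↔
      (C.image (fun p => ((n : ℤ) - 1 - p.1, p.2)) ≠ C ∧
       C.image (fun p => (p.1, (m : ℤ) - 1 - p.2)) ≠ C ∧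
       C.image (fun p => ((n : ℤ) - 1 - p.1, (m : ℤ) - 1 - p.2)) ≠ C) := by
  change _ ↔ C.image (reflX n) ≠ C ∧ C.image (reflY m) ≠ C ∧ C.image (reflX n ∘ reflY m) ≠ C
  have eq_iff := fun {g h} =>
    lamAB_image_eq_lamAB_image_iff (g := g) (h := h) hser.coe_subset_gridRect
  have hX : Set.MapsTo (reflX n) (gridRect n m) (gridRect n m) := mapsTo_reflX
  have hY : Set.MapsTo (reflY m) (gridRect n m) (gridRect n m) := mapsTo_reflY
  have hXY := hX.comp hY
  have hid := Set.mapsTo_id (gridRect n m)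
  have ab_ba := eq_iff hid hX fun _ => rfl
  have ab_cd := eq_iff hid hXY fun _ => rfl
  have ab_dc := eq_iff hid hY fun _ => rfl
  have ba_cd := eq_iff hX hXY reflX_involutive
  have ba_dc := eq_iff hX hY reflX_involutive
  have cd_dc := eq_iff hXY hY reflX_comp_reflY_involutive
  rw [← comp_assoc, reflX_involutive.comp_self, id_comp] at ba_cd
  rw [comp_assoc, reflY_involutive.comp_self, comp_id] at cd_dc
  rw [strings4_eq_map_lamAB_image]
  simp only [List.map_cons, List.map_nil, id_comp] at ab_ba ab_cd ab_dc ⊢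
  constructor
  · intro hmax
    refine ⟨fun hv => ?_, fun hh => ?_, fun hr => ?_⟩ <;>
      refine not_exists_uniqueMaxAt_of_paired ?_ hmax
    · exact Or.inl ⟨ab_ba.2 hv, cd_dc.2 hv⟩
    · exact Or.inr (Or.inr ⟨ab_dc.2 hh, ba_cd.2 hh⟩)
    · exact Or.inr (Or.inl ⟨ab_cd.2 hr, ba_dc.2 hr⟩)
  · rintro ⟨hv, hh, hr⟩
    refine exists_uniqueMaxAt_of_nodup (List.cons_ne_nil _ _) ?_
    simp only [List.nodup_cons, List.mem_cons, List.not_mem_nil, or_false, not_or, List.nodup_nil,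
      not_false_eq_true, and_true]
    exact ⟨⟨mt ab_ba.1 hv, mt ab_cd.1 hr, mt ab_dc.1 hh⟩, ⟨mt ba_cd.1 hh, mt ba_dc.1 hr⟩,
      mt cd_dc.1 hv⟩

/-- Let `C` be a configuration whose smallest enclosing
rectangle `R = ABCD` is non-square, with `A = (0,0)`, `B = (n-1,0)`,
`C = (n-1,m-1)`, `D = (0,m-1)` after translation and `m ≠ n`.  Then the
following are equivalent: (1) among the four associated strings `λ_AB`, `λ_BA`,
`λ_CD`, `λ_DC` there is a unique lexicographically largest one (`C` is
asymmetric); (2) none of the three nontrivial symmetries of `R` — the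
reflection `σ_v(x,y) = (n-1-x, y)`, the reflection `σ_h(x,y) = (x, m-1-y)` and
the rotation `ρ(x,y) = (n-1-x, m-1-y)` — maps `C` onto `C`. -/
theorem asymmetric_iff_no_nontrivial_rectangle_symmetry
    (C : Finset (ℤ × ℤ)) (n m : ℕ) (hn : 1 ≤ n) (hm : 1 ≤ m) (hne : n ≠ m)
    (hser : isSER C n m) :
    (∃ i, uniqueMaxAt (strings4 C n m) i) ↔
      (C.image (fun p => ((n : ℤ) - 1 - p.1, p.2)) ≠ C ∧
       C.image (fun p => (p.1, (m : ℤ) - 1 - p.2)) ≠ C ∧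
       C.image (fun p => ((n : ℤ) - 1 - p.1, (m : ℤ) - 1 - p.2)) ≠ C) :=
  asymmetric_iff_no_nontrivial_rectangle_symmetry_general C n m hser
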